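/- arXiv:1611.06864 — 3 statements merged into one kernel-verified Lean document; each statement's English description precedes it below -/
import Mathlib

section
/- If at most L omission faults occur in interactions involving the leader, and the leader increments a counter next_ID on every interaction in which it participates except when the interaction is omissive on its side, and every non-leader agent that successfully reads the leader's state appends the current value of next_ID to its local list, then after every agent has successfully read the leader L+1 times, the resulting (L+1)-tuples of recorded values are pairwise distinct across agents. -/
/-- Naming with at most `L` omissions involving the leader: the leader's counter
increments exactly at non-omissive events; each agent records the counter value at
each of its (L+1) read events; the resulting (L+1)-tuples are pairwise distinct. -/
theorem stmt0 {A : Type*} (L T : ℕ)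
    (agent : ℕ → A) (omiss : ℕ → Bool)
    (counter : ℕ → ℕ)
    (hc0 : counter 0 = 0)
    (hcs : ∀ k, counter (k + 1) = counter k + (if omiss k then 0 else 1))
    (homiss : ((Finset.range T).filter (fun k => omiss k = true)).card ≤ L)
    (evt : A → Fin (L + 1) → ℕ)
    (hmono : ∀ a, StrictMono (evt a))
    (hown : ∀ a i, agent (evt a i) = a)
    (hlt : ∀ a i, evt a i < T)
    (ID : A → Fin (L + 1) → ℕ)
    (hID : ∀ a i, ID a i = counter (evt a i)) :
    ∀ a b : A, a ≠ b → ID a ≠ ID b := by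
  have cmono : Monotone counter := by
    apply monotone_nat_of_le_succ
    intro k
    rw [hcs k]
    exact Nat.le_add_right _ _
  -- if counter m = counter (m+something) with m < n then omiss m = true
  have key : ∀ m n, m < n → counter m = counter n → omiss m = true := by
    intro m n hmn hcn
    by_contra h
    have h' : omiss m = false := by simpa using h
    have h1 : counter (m + 1) = counter m + 1 := by rw [hcs m, h']; simp
    have h2 : counter (m + 1) ≤ counter n := cmono hmn
    omega
  intro a b hab hid
  -- min of the event pairs gives a strictly monotone family of omissive events
  set f : Fin (L + 1) → ℕ := fun i => min (evt a i) (evt b i) with hf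
  have hfmono : StrictMono f := fun i j hij =>
    lt_min (min_lt_of_left_lt (hmono a hij)) (min_lt_of_right_lt (hmono b hij))
  have hfmem : ∀ i, f i ∈ (Finset.range T).filter (fun k => omiss k = true) := by
    intro i
    have hne : evt a i ≠ evt b i := by
      intro he
      apply hab
      rw [← hown a i, he, hown b i]
    have hceq : counter (evt a i) = counter (evt b i) := by
      rw [← hID a i, ← hID b i, hid]
    have homi : omiss (f i) = true := by
      rcases lt_or_gt_of_ne hne with h | h
      · have : f i = evt a i := min_eq_left h.le
        rw [this]; exact key _ _ h hceq
      · have : f i = evt b i := min_eq_right h.le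
        rw [this]; exact key _ _ h hceq.symm
    simp only [Finset.mem_filter, Finset.mem_range]
    exact ⟨lt_of_le_of_lt (min_le_left _ _) (hlt a i), homi⟩
  have hcard : L + 1 ≤ ((Finset.range T).filter (fun k => omiss k = true)).card := by
    calc L + 1 = (Finset.univ : Finset (Fin (L+1))).card := by simp
    _ = (Finset.univ.image f).card :=
        (Finset.card_image_of_injective _ hfmono.injective).symm
    _ ≤ _ := by
        apply Finset.card_le_card
        intro x hx
        simp only [Finset.mem_image] at hx
        obtain ⟨i, _, rfl⟩ := hx
        exact hfmem i
  omega
end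

section
/- If in every configuration of a finite-state system there is at most one 'pending' simulated transition, and the scheduler is globally fair, then every started simulated transition is eventually completed, and infinitely many simulated transitions occur. -/
/-- In a finite-state system where from every configuration with a pending transaction
one can reach a configuration where it is completed, and from every configuration
without a pending transaction one can reach one where a transaction is started, any
globally fair infinite execution completes every started transaction, and completes
transactions infinitely often. -/
theorem stmt10 {C : Type*} [Finite C] (step : C → C → Prop) (Pending : C → Prop)
    (hcomplete : ∀ c, Pending c → ∃ c', Relation.ReflTransGen step c c' ∧ ¬ Pending c')
    (hstart : ∀ c, ¬ Pending c → ∃ c', Relation.ReflTransGen step c c' ∧ Pending c')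
    (e : ℕ → C) (hexec : ∀ t, step (e t) (e (t + 1)))
    (hfair : ∀ c c', step c c' →
      (∀ N, ∃ n, N ≤ n ∧ e n = c) → (∀ N, ∃ n, N ≤ n ∧ e n = c')) :
    (∀ t, Pending (e t) → ∃ t', t ≤ t' ∧ ¬ Pending (e t')) ∧
    (∀ N, ∃ n, N ≤ n ∧ Pending (e n) ∧ ¬ Pending (e (n + 1))) := by
  classical
  -- fairness for reflexive transitive closure
  have hfair' : ∀ c c', Relation.ReflTransGen step c c' →
      (∀ N, ∃ n, N ≤ n ∧ e n = c) → (∀ N, ∃ n, N ≤ n ∧ e n = c') := by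
    intro c c' h
    induction h with
    | refl => exact fun h => h
    | tail _ hstep ih => exact fun h => hfair _ _ hstep (ih h)
  -- some configuration occurs infinitely often
  obtain ⟨c, hc⟩ := Finite.exists_infinite_fiber e
  have hcinf : ∀ N, ∃ n, N ≤ n ∧ e n = c := by
    intro N
    obtain ⟨n, hn, hn'⟩ := (Set.infinite_coe_iff.mp hc).exists_gt N
    exact ⟨n, le_of_lt hn', hn⟩
  -- a non-pending configuration occurs infinitely often
  have hNP : ∀ N, ∃ n, N ≤ n ∧ ¬ Pending (e n) := by
    by_cases hp : Pending c
    · obtain ⟨c', hreach, hc'⟩ := hcomplete c hp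
      intro N
      obtain ⟨n, hn, rfl⟩ := hfair' c c' hreach hcinf N
      exact ⟨n, hn, hc'⟩
    · intro N
      obtain ⟨n, hn, rfl⟩ := hcinf N
      exact ⟨n, hn, hp⟩
  -- a pending configuration occurs infinitely often
  have hP : ∀ N, ∃ n, N ≤ n ∧ Pending (e n) := by
    by_cases hp : Pending c
    · intro N
      obtain ⟨n, hn, rfl⟩ := hcinf N
      exact ⟨n, hn, hp⟩
    · obtain ⟨c', hreach, hc'⟩ := hstart c hp
      intro N
      obtain ⟨n, hn, rfl⟩ := hfair' c c' hreach hcinf N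
      exact ⟨n, hn, hc'⟩
  constructor
  · intro t _
    obtain ⟨t', ht, ht'⟩ := hNP t
    exact ⟨t', ht, ht'⟩
  · intro N
    obtain ⟨n, hn, hpn⟩ := hP N
    obtain ⟨m, hm, hnm⟩ := hNP (n + 1)
    have hex : ∃ k, ¬ Pending (e (n + k + 1)) := ⟨m - (n + 1), by
      have : n + (m - (n + 1)) + 1 = m := by omega
      rw [this]; exact hnm⟩
    have hk' : ¬ Pending (e (n + Nat.find hex + 1)) := Nat.find_spec hex
    rcases Nat.eq_zero_or_pos (Nat.find hex) with h0 | hpos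
    · rw [h0] at hk'
      exact ⟨n, hn, hpn, by simpa using hk'⟩
    · have hj : Pending (e (n + (Nat.find hex - 1) + 1)) := by
        by_contra h
        have := @Nat.find_le _ _ _ hex h
        omega
      refine ⟨n + (Nat.find hex - 1) + 1, by omega, hj, ?_⟩
      have heq : n + (Nat.find hex - 1) + 1 + 1 = n + Nat.find hex + 1 := by omega
      rw [heq]; exact hk'
end

section
/- Suppose two agents a and b each execute a deterministic update rule where their new state depends only on their own state and the observed state of the leader, the leader's state sequence they observe is identical (they each observe the leader exactly when it is in a given sequence of states q_1, q_2, ..., in the same order), they start in the same state, and they never observe each other. Then a and b have the same state after each corresponding observation; in particular if a ever reaches the simulated state cs, then so does b, violating the safety property of the Pairing Problem when only one producer exists. -/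
/-- If agents `a` and `b` start in the same state, observe the leader in the same
sequence of states, and update deterministically via `f` applied to the observed
leader state and their own state, then they have equal states after every step; in
particular if `a` reaches `cs`, so does `b`. -/
theorem stmt15 {Q : Type*} (f : Q → Q → Q) (q0 cs : Q) (q : ℕ → Q)
    (sa sb : ℕ → Q) (ha0 : sa 0 = q0) (hb0 : sb 0 = q0)
    (ha : ∀ i, sa (i + 1) = f (q (i + 1)) (sa i))
    (hb : ∀ i, sb (i + 1) = f (q (i + 1)) (sb i)) :
    (∀ i, sa i = sb i) ∧ ((∃ i, sa i = cs) → ∃ i, sb i = cs) := by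
  have h : ∀ i, sa i = sb i := by
    intro i
    induction i with
    | zero => rw [ha0, hb0]
    | succ n ih => rw [ha, hb, ih]
  exact ⟨h, fun ⟨i, hi⟩ => ⟨i, (h i) ▸ hi⟩⟩
end
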